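/- arXiv:cs/9809027 — 2 statements merged into one kernel-verified Lean document; each statement's English description precedes it below -/
import Mathlib

section
/- Let g_1, …, g_k : [0,1]^k → [0,1] be multivariate polynomials with nonnegative coefficients satisfying g_i(1,…,1) = 1 for each i, and let M be the k×k Jacobian matrix M_{i,j} = ∂g_i/∂s_j evaluated at (1,…,1). If every row sum of M is strictly less than 1, then the iteration s⁽⁰⁾ = (0,…,0), s⁽ⁿ⁺¹⁾ = (g_1(s⁽ⁿ⁾), …, g_k(s⁽ⁿ⁾)) converges to (1,…,1). -/
/-!
The map `G s = (g_i(s))_i` preserves the cube `[0,1]^k` because the `g_i` have nonnegative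
coefficients, and on the cube Bernoulli's inequality applied monomial by monomial gives the mean
value inequality `1 - g_i(s) ≤ ∑_j M_{ij} (1 - s_j)`. If `ρ < 1` bounds the row sums of `M`, then
`‖1 - G s‖∞ ≤ ρ ‖1 - s‖∞` on the cube, so the iterates from `0` converge to `1` geometrically.
-/

open MvPolynomial Finset Filter Topology
open scoped Matrix

theorem Finite.exists_le_lt_of_forall_lt {ι α : Type*} [Finite ι] [LinearOrder α] {f : ι → α}
    {a b : α} (hab : a < b) (hf : ∀ i, f i < b) : ∃ c, a ≤ c ∧ c < b ∧ ∀ i, f i ≤ c := by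
  cases isEmpty_or_nonempty ι
  · exact ⟨a, le_rfl, hab, isEmptyElim⟩
  · obtain ⟨i₀, hi₀⟩ := Finite.exists_max f
    exact ⟨max a (f i₀), le_max_left _ _, max_lt hab (hf i₀),
      fun i => (hi₀ i).trans (le_max_right _ _)⟩

theorem tendsto_iterate_of_norm_sub_le_mul {E : Type*} [SeminormedAddCommGroup E] {F : E → E}
    {S : Set E} {a x : E} {ρ : ℝ} (hS : Set.MapsTo F S S) (hρ0 : 0 ≤ ρ) (hρ1 : ρ < 1)
    (hF : ∀ s ∈ S, ‖F s - a‖ ≤ ρ * ‖s - a‖) (hx : x ∈ S) :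
    Tendsto (fun n => F^[n] x) atTop (𝓝 a) := by
  have hbound : ∀ n, ‖F^[n] x - a‖ ≤ ρ ^ n * ‖x - a‖ := by
    intro n
    induction n with
    | zero => simp
    | succ n ih =>
      rw [Function.iterate_succ_apply', pow_succ', mul_assoc]
      exact (hF _ (hS.iterate n hx)).trans (mul_le_mul_of_nonneg_left ih hρ0)
  rw [tendsto_iff_norm_sub_tendsto_zero]
  refine squeeze_zero (fun _ => norm_nonneg _) hbound ?_
  simpa using (tendsto_pow_atTop_nhds_zero_of_lt_one hρ0 hρ1).mul_const ‖x - a‖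

theorem Matrix.norm_le_mul_norm_of_le_mulVec {ι : Type*} [Fintype ι] {M : Matrix ι ι ℝ} {ρ : ℝ}
    (hM : ∀ i j, 0 ≤ M i j) (hrow : ∀ i, ∑ j, M i j ≤ ρ) (hρ : 0 ≤ ρ) {u v : ι → ℝ}
    (hu : 0 ≤ u) (huv : u ≤ M *ᵥ v) : ‖u‖ ≤ ρ * ‖v‖ := by
  refine (pi_norm_le_iff_of_nonneg (by positivity)).2 fun i => ?_
  calc ‖u i‖ = u i := Real.norm_of_nonneg (hu i)
    _ ≤ ∑ j, M i j * v j := huv i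
    _ ≤ ∑ j, M i j * ‖v‖ := by
      gcongr with j
      · exact hM i j
      · exact (le_abs_self _).trans (norm_le_pi_norm v j)
    _ = (∑ j, M i j) * ‖v‖ := (Finset.sum_mul _ _ _).symm
    _ ≤ ρ * ‖v‖ := by gcongr; exact hrow i

section OrderedRing

variable {R : Type*} [CommRing R] [LinearOrder R] [IsStrictOrderedRing R]

theorem one_sub_pow_le_mul_one_sub {s : R} (hs : -1 ≤ s) (n : ℕ) : 1 - s ^ n ≤ n * (1 - s) := by
  have := one_add_mul_le_pow (a := s - 1) (by linarith) n
  rw [add_sub_cancel] at this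
  linarith

theorem one_sub_prod_le_sum_one_sub {ι : Type*} (T : Finset ι) {x : ι → R}
    (h0 : ∀ j ∈ T, 0 ≤ x j) (h1 : ∀ j ∈ T, x j ≤ 1) :
    1 - ∏ j ∈ T, x j ≤ ∑ j ∈ T, (1 - x j) := by
  classical
  induction T using Finset.induction_on with
  | empty => simp
  | insert a T ha ih =>
    rw [forall_mem_insert] at h0 h1
    rw [prod_insert ha, sum_insert ha]
    have hT : ∏ j ∈ T, x j ≤ 1 := prod_le_one h0.2 h1.2
    -- `1 - x P = (1 - x) + x (1 - P)` and `x (1 - P) ≤ 1 - P`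
    linarith [ih h0.2 h1.2, mul_le_of_le_one_left (sub_nonneg.2 hT) h1.1]

theorem one_sub_prod_pow_le_sum_mul_one_sub {σ : Type*} [Fintype σ] {s : σ → R} (h0 : 0 ≤ s)
    (h1 : s ≤ 1) (d : σ →₀ ℕ) : 1 - ∏ j, s j ^ d j ≤ ∑ j, (d j : R) * (1 - s j) :=
  calc 1 - ∏ j, s j ^ d j ≤ ∑ j, (1 - s j ^ d j) :=
        one_sub_prod_le_sum_one_sub _ (fun j _ => pow_nonneg (h0 j) _)
          fun j _ => pow_le_one₀ (h0 j) (h1 j)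
    _ ≤ ∑ j, (d j : R) * (1 - s j) :=
        sum_le_sum fun j _ => one_sub_pow_le_mul_one_sub (neg_one_lt_zero.le.trans (h0 j)) _

end OrderedRing

namespace MvPolynomial

theorem eval_one_pderiv {R σ : Type*} [CommSemiring R] (p : MvPolynomial σ R) (j : σ) :
    eval 1 (pderiv j p) = ∑ d ∈ p.support, p.coeff d * d j := by
  conv_lhs => rw [p.as_sum]
  rw [map_sum, map_sum]
  refine sum_congr rfl fun d _ => ?_
  rw [pderiv_monomial, eval_monomial]
  simp [Finsupp.prod]

section OrderedSemiring

variable {R σ : Type*} [CommSemiring R] [PartialOrder R] [IsOrderedRing R] {p : MvPolynomial σ R}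

theorem eval_nonneg_of_coeff_nonneg (hp : ∀ m, 0 ≤ p.coeff m) {s : σ → R} (hs : 0 ≤ s) :
    0 ≤ eval s p := by
  rw [eval_eq]
  exact sum_nonneg fun d _ => mul_nonneg (hp d) (prod_nonneg fun j _ => pow_nonneg (hs j) _)

theorem eval_le_eval_of_coeff_nonneg (hp : ∀ m, 0 ≤ p.coeff m) {s t : σ → R} (hs : 0 ≤ s)
    (hst : s ≤ t) : eval s p ≤ eval t p := by
  rw [eval_eq, eval_eq]
  refine sum_le_sum fun d _ => mul_le_mul_of_nonneg_left ?_ (hp d)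
  exact prod_le_prod (fun j _ => pow_nonneg (hs j) _)
    fun j _ => pow_le_pow_left₀ (hs j) (hst j) _

theorem eval_one_pderiv_nonneg (hp : ∀ m, 0 ≤ p.coeff m) (j : σ) : 0 ≤ eval 1 (pderiv j p) := by
  rw [eval_one_pderiv]
  exact sum_nonneg fun d _ => mul_nonneg (hp d) (Nat.cast_nonneg _)

end OrderedSemiring

theorem eval_one_sub_eval_le_sum_pderiv {R σ : Type*} [CommRing R] [LinearOrder R]
    [IsStrictOrderedRing R] [Fintype σ] {p : MvPolynomial σ R} (hp : ∀ m, 0 ≤ p.coeff m)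
    {s : σ → R} (h0 : 0 ≤ s) (h1 : s ≤ 1) :
    eval 1 p - eval s p ≤ ∑ j, eval 1 (pderiv j p) * (1 - s j) := by
  calc eval 1 p - eval s p = ∑ d ∈ p.support, p.coeff d * (1 - ∏ j, s j ^ d j) := by
        simp only [eval_eq', Pi.one_apply, one_pow, prod_const_one, mul_one, mul_one_sub,
          sum_sub_distrib]
    _ ≤ ∑ d ∈ p.support, p.coeff d * ∑ j, (d j : R) * (1 - s j) :=
        sum_le_sum fun d _ =>
          mul_le_mul_of_nonneg_left (one_sub_prod_pow_le_sum_mul_one_sub h0 h1 d) (hp d)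
    _ = ∑ j, eval 1 (pderiv j p) * (1 - s j) := by
        simp only [eval_one_pderiv, mul_sum, sum_mul, mul_assoc]
        exact sum_comm

end MvPolynomial

/-- Multitype branching-process consistency criterion, n = 1 Geršgorin test: if the
adjunction generating functions g_i are polynomials with nonnegative coefficients,
g_i(1,…,1) = 1, and every row sum of the Jacobian at 1 is < 1, then the level iterates
starting from 0 converge to (1,…,1). -/
theorem iterates_tendsto_one_of_jacobian_rowSums_lt_one {k : ℕ}
    (g : Fin k → MvPolynomial (Fin k) ℝ)
    (hcoeff : ∀ i m, 0 ≤ (g i).coeff m)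
    (h1 : ∀ i, MvPolynomial.eval (fun _ => (1 : ℝ)) (g i) = 1)
    (M : Matrix (Fin k) (Fin k) ℝ)
    (hM : ∀ i j, M i j = MvPolynomial.eval (fun _ => (1 : ℝ)) (MvPolynomial.pderiv j (g i)))
    (hrow : ∀ i, ∑ j, M i j < 1) :
    Filter.Tendsto
      (fun n => (fun s : Fin k → ℝ => fun i => MvPolynomial.eval s (g i))^[n] (fun _ => 0))
      Filter.atTop (nhds (fun _ => 1)) := by
  set G : (Fin k → ℝ) → Fin k → ℝ := fun s i => eval s (g i)
  obtain ⟨ρ, hρ0, hρ1, hρrow⟩ := Finite.exists_le_lt_of_forall_lt zero_lt_one hrow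
  have hM0 : ∀ i j, 0 ≤ M i j := fun i j => hM i j ▸ eval_one_pderiv_nonneg (hcoeff i) j
  have hG_maps : Set.MapsTo G (Set.Icc 0 1) (Set.Icc 0 1) := fun s hs =>
    ⟨fun i => eval_nonneg_of_coeff_nonneg (hcoeff i) hs.1,
      fun i => (h1 i).le.trans' (eval_le_eval_of_coeff_nonneg (hcoeff i) hs.1 hs.2)⟩
  have hG_contr : ∀ s ∈ Set.Icc 0 1, ‖G s - 1‖ ≤ ρ * ‖s - 1‖ := by
    intro s hs
    rw [← norm_neg, neg_sub, ← norm_neg (s - 1), neg_sub]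
    refine Matrix.norm_le_mul_norm_of_le_mulVec hM0 hρrow hρ0 (sub_nonneg.2 (hG_maps hs).2)
      fun i => ?_
    simpa [G, Matrix.mulVec, dotProduct, hM, Pi.one_def, h1] using
      eval_one_sub_eval_le_sum_pderiv (hcoeff i) hs.1 hs.2
  exact tendsto_iterate_of_norm_sub_le_mul hG_maps hρ0 hρ1 hG_contr ⟨le_rfl, zero_le_one⟩
end

section
/- Let g : [0,1]^k → [0,1]^k be coordinatewise monotone (s ≤ t implies g(s) ≤ g(t) componentwise) and continuous with g(1,…,1) = (1,…,1), and suppose there is a nonnegative matrix M with ρ(M) < 1 such that (1 − g(s)_i) ≤ ∑_j M_{i,j}(1 − s_j) for all s ∈ [0,1]^k. Then the iterates of g starting at (0,…,0) converge to (1,…,1). -/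
/-!
Since `g` maps the box into itself, the domination hypothesis can be iterated: for a
nonnegative `M` it gives `1 - gⁿ(0) ≤ Mⁿ 1` componentwise. By Gelfand's formula `ρ(M) < 1`
forces `Mⁿ → 0`, so `gⁿ(0)` is squeezed between `1 - Mⁿ 1` and `1`.
-/

open Filter Topology Matrix

noncomputable def specRad {k : ℕ} (M : Matrix (Fin k) (Fin k) ℂ) : ℝ :=
  sSup {x : ℝ | ∃ μ ∈ spectrum ℂ M, x = ‖μ‖}

theorem spectrum.tendsto_pow_nhds_zero_of_spectralRadius_lt_one {A : Type*} [NormedRing A]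
    [NormedAlgebra ℂ A] [CompleteSpace A] {a : A} (h : spectralRadius ℂ a < 1) :
    Tendsto (a ^ ·) atTop (𝓝 0) := by
  obtain ⟨r, hρr, hr1⟩ := ENNReal.lt_iff_exists_nnreal_btwn.1 h
  have hroot : ∀ᶠ n : ℕ in atTop, (‖a ^ n‖₊ : ENNReal) ^ (1 / (n : ℝ)) < r :=
    (pow_nnnorm_pow_one_div_tendsto_nhds_spectralRadius a).eventually_lt_const hρr
  have hgeom : ∀ᶠ n : ℕ in atTop, ‖a ^ n‖ ≤ (r : ℝ) ^ n := by
    filter_upwards [hroot, eventually_ne_atTop 0] with n hn hn0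
    have hpow := ENNReal.rpow_le_rpow hn.le (z := n) (by positivity)
    rw [← ENNReal.rpow_mul, one_div_mul_cancel (by exact_mod_cast hn0), ENNReal.rpow_one,
      ENNReal.rpow_natCast, ← ENNReal.coe_pow, ENNReal.coe_le_coe] at hpow
    exact_mod_cast hpow
  exact squeeze_zero_norm' hgeom
    (tendsto_pow_atTop_nhds_zero_of_lt_one r.coe_nonneg (by exact_mod_cast hr1))

theorem spectralRadius_le_ofReal_specRad {k : ℕ} (A : Matrix (Fin k) (Fin k) ℂ) :
    spectralRadius ℂ A ≤ ENNReal.ofReal (specRad A) := by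
  have hbdd : BddAbove {x : ℝ | ∃ μ ∈ spectrum ℂ A, x = ‖μ‖} := by
    refine (A.finite_spectrum.image (‖·‖)).bddAbove.mono ?_
    rintro _ ⟨μ, hμ, rfl⟩
    exact ⟨μ, hμ, rfl⟩
  refine iSup₂_le fun μ hμ => ?_
  show ‖μ‖ₑ ≤ _
  rw [← ofReal_norm]
  exact ENNReal.ofReal_le_ofReal (le_csSup hbdd ⟨μ, hμ, rfl⟩)

section MatrixNorm

-- The choice of Banach algebra norm is immaterial: the conclusion only involves the topology.
attribute [local instance] Matrix.linftyOpNormedRing Matrix.linftyOpNormedAlgebra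

theorem Matrix.tendsto_pow_nhds_zero_of_specRad_lt_one {k : ℕ} (M : Matrix (Fin k) (Fin k) ℝ)
    (h : specRad (M.map (Complex.ofReal ·)) < 1) : Tendsto (M ^ ·) atTop (𝓝 0) := by
  set A := M.map (Complex.ofReal ·)
  have hρ : spectralRadius ℂ A < 1 :=
    (spectralRadius_le_ofReal_specRad A).trans_lt (ENNReal.ofReal_lt_one.mpr h)
  have hre : Tendsto (fun n => (A ^ n).map Complex.re) atTop (𝓝 0) := by
    simpa [Function.comp_def] using
      ((continuous_id.matrix_map Complex.continuous_re).tendsto 0).comp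
        (spectrum.tendsto_pow_nhds_zero_of_spectralRadius_lt_one hρ)
  convert hre using 2 with n
  have hpow : A ^ n = (M ^ n).map (Complex.ofReal ·) :=
    (map_pow Complex.ofRealHom.mapMatrix M n).symm
  ext i j
  simp [hpow]

end MatrixNorm

section Iterates

variable {ι : Type*} [Fintype ι] {M : Matrix ι ι ℝ}

theorem Matrix.mulVec_mono_of_nonneg (hM : ∀ i j, 0 ≤ M i j) {v w : ι → ℝ} (h : v ≤ w) :
    M *ᵥ v ≤ M *ᵥ w :=
  fun i => Finset.sum_le_sum fun j _ => mul_le_mul_of_nonneg_left (h j) (hM i j)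

theorem one_sub_iterate_le_pow_mulVec [DecidableEq ι] {g : (ι → ℝ) → (ι → ℝ)}
    (hM : ∀ i j, 0 ≤ M i j) (hmaps : Set.MapsTo g (Set.Icc 0 1) (Set.Icc 0 1))
    (hbound : ∀ s ∈ Set.Icc (0 : ι → ℝ) 1, 1 - g s ≤ M *ᵥ (1 - s))
    {x : ι → ℝ} (hx : x ∈ Set.Icc 0 1) (n : ℕ) : 1 - g^[n] x ≤ (M ^ n) *ᵥ (1 - x) := by
  induction n with
  | zero => simp
  | succ n ih =>
    calc 1 - g^[n + 1] x = 1 - g (g^[n] x) := by rw [Function.iterate_succ_apply']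
      _ ≤ M *ᵥ (1 - g^[n] x) := hbound _ (hmaps.iterate n hx)
      _ ≤ M *ᵥ ((M ^ n) *ᵥ (1 - x)) := Matrix.mulVec_mono_of_nonneg hM ih
      _ = (M ^ (n + 1)) *ᵥ (1 - x) := by rw [Matrix.mulVec_mulVec, pow_succ']

end Iterates

theorem iterates_tendsto_one_of_specRad_lt_one_general {k : ℕ}
    (g : (Fin k → ℝ) → (Fin k → ℝ))
    (hmaps : Set.MapsTo g (Set.Icc 0 1) (Set.Icc 0 1))
    (M : Matrix (Fin k) (Fin k) ℝ)
    (hMnn : ∀ i j, 0 ≤ M i j)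
    (hρ : specRad (M.map (Complex.ofReal ·)) < 1)
    (hbound : ∀ s ∈ Set.Icc (0 : Fin k → ℝ) 1, ∀ i, 1 - g s i ≤ ∑ j, M i j * (1 - s j)) :
    Filter.Tendsto (fun n => g^[n] 0) Filter.atTop (nhds 1) := by
  have h0 : (0 : Fin k → ℝ) ∈ Set.Icc 0 1 := ⟨le_rfl, zero_le_one⟩
  have hdefect : Tendsto (fun n => 1 - (M ^ n) *ᵥ 1) atTop (𝓝 1) := by
    simpa using tendsto_const_nhds.sub
      (((continuous_id.matrix_mulVec continuous_const).tendsto 0).comp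
        (M.tendsto_pow_nhds_zero_of_specRad_lt_one hρ))
  have hlower : ∀ n, 1 - (M ^ n) *ᵥ 1 ≤ g^[n] 0 := fun n => sub_le_comm.mp <| by
    simpa using
      one_sub_iterate_le_pow_mulVec hMnn hmaps (fun s hs i => hbound s hs i) h0 n
  rw [tendsto_pi_nhds] at hdefect ⊢
  exact fun i => tendsto_of_tendsto_of_tendsto_of_le_of_le (hdefect i) tendsto_const_nhds
    (fun n => hlower n i) (fun n => (hmaps.iterate n h0).2 i)

/-- Abstract version of the consistency theorem: a monotone continuous self-map of the
unit box fixing (1,…,1), whose distance from 1 is dominated by a nonnegative matrix with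
spectral radius < 1, has iterates from 0 converging to (1,…,1). -/
theorem iterates_tendsto_one_of_specRad_lt_one {k : ℕ}
    (g : (Fin k → ℝ) → (Fin k → ℝ))
    (hmono : ∀ s t : Fin k → ℝ, s ∈ Set.Icc 0 1 → t ∈ Set.Icc 0 1 → s ≤ t → g s ≤ g t)
    (hcont : ContinuousOn g (Set.Icc 0 1))
    (hmaps : Set.MapsTo g (Set.Icc 0 1) (Set.Icc 0 1))
    (h1 : g 1 = 1)
    (M : Matrix (Fin k) (Fin k) ℝ)
    (hMnn : ∀ i j, 0 ≤ M i j)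
    (hρ : specRad (M.map (Complex.ofReal ·)) < 1)
    (hbound : ∀ s ∈ Set.Icc (0 : Fin k → ℝ) 1, ∀ i, 1 - g s i ≤ ∑ j, M i j * (1 - s j)) :
    Filter.Tendsto (fun n => g^[n] 0) Filter.atTop (nhds 1) :=
  iterates_tendsto_one_of_specRad_lt_one_general g hmaps M hMnn hρ hbound
end
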